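/- arXiv:0709.0195 — 4 statements merged into one kernel-verified Lean document; each statement's English description precedes it below -/
import Mathlib

section
/- Let I be an infinite indiscernible set and B any set of parameters. Then the average type Av(I,B), consisting of all formulas φ(x,b) with b ∈ B true of all but finitely many elements of I, is a complete consistent type over B. -/
open FirstOrder Cardinal

universe u

variable {L : FirstOrder.Language.{u, u}} {M : Type u} [L.Structure M]

/-- A formula in `m` free variables together with a tuple of parameters from `M`. -/
structure PFormula (L : FirstOrder.Language.{u, u}) (M : Type u) [L.Structure M] (m : ℕ) where
  n : ℕ
  toFormula : L.Formula (Fin m ⊕ Fin n)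
  par : Fin n → M

namespace PFormula

variable {m : ℕ}

/-- Realization of a parametrized formula by an `m`-tuple. -/
def Realize (ψ : PFormula L M m) (a : Fin m → M) : Prop :=
  ψ.toFormula.Realize (Sum.elim a ψ.par)

/-- Realization of a parametrized formula in one variable by an element. -/
def Realize1 (ψ : PFormula L M 1) (a : M) : Prop :=
  ψ.Realize fun _ => a

/-- Negation of a parametrized formula. -/
def not (ψ : PFormula L M m) : PFormula L M m :=
  ⟨ψ.n, ψ.toFormula.not, ψ.par⟩

/-- The parameters of `ψ` all lie in `B`. -/
def Over (ψ : PFormula L M m) (B : Set M) : Prop :=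
  ∀ i, ψ.par i ∈ B

end PFormula

/-- Two tuples have the same type over the parameter set `A`. -/
def SameTypeOver (L : FirstOrder.Language.{u, u}) {M : Type u} [L.Structure M]
    (A : Set M) {γ : Type} (b c : γ → M) : Prop :=
  ∀ (k : ℕ) (φ : L.Formula (γ ⊕ Fin k)) (a : Fin k → M),
    (∀ i, a i ∈ A) → (φ.Realize (Sum.elim b a) ↔ φ.Realize (Sum.elim c a))

/-- A sequence of `d`-tuples, indexed by a linear order, is indiscernible over `A`. -/
def IndiscTupleSeqOver (L : FirstOrder.Language.{u, u}) {M : Type u} [L.Structure M]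
    (A : Set M) {ι : Type*} [LinearOrder ι] {d : ℕ} (f : ι → Fin d → M) : Prop :=
  ∀ (n : ℕ) (s t : Fin n → ι), StrictMono s → StrictMono t →
    SameTypeOver L A (fun q : Fin n × Fin d => f (s q.1) q.2)
      (fun q : Fin n × Fin d => f (t q.1) q.2)

/-- A sequence of elements, indexed by a linear order, is indiscernible over `A`. -/
def IndiscSeqOver (L : FirstOrder.Language.{u, u}) {M : Type u} [L.Structure M]
    (A : Set M) {ι : Type*} [LinearOrder ι] (f : ι → M) : Prop :=
  ∀ (n : ℕ) (s t : Fin n → ι), StrictMono s → StrictMono t →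
    SameTypeOver L A (fun i => f (s i)) (fun i => f (t i))

/-- A family of elements is an indiscernible *set* over `A`: the type of a tuple of
distinct elements depends only on its length. -/
def IndiscSetOver (L : FirstOrder.Language.{u, u}) {M : Type u} [L.Structure M]
    (A : Set M) {ι : Type*} (f : ι → M) : Prop :=
  ∀ (n : ℕ) (s t : Fin n → ι), Function.Injective s → Function.Injective t →
    SameTypeOver L A (fun i => f (s i)) (fun i => f (t i))

/-- `p` is a complete consistent `m`-type over `B`: all parameters come from `B`, for each
formula over `B` it contains the formula or its negation, and every finite subset is
realized (in the monster). -/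
def IsTypeOver {m : ℕ} (p : Set (PFormula L M m)) (B : Set M) : Prop :=
  (∀ ψ ∈ p, ψ.Over B) ∧
  (∀ ψ : PFormula L M m, ψ.Over B → ψ ∈ p ∨ ψ.not ∈ p) ∧
  (∀ s : Finset (PFormula L M m), ↑s ⊆ p → ∃ a : Fin m → M, ∀ ψ ∈ s, ψ.Realize a)

/-- `p` is finitely satisfiable in `A`: every finite subset of `p` is realized by a tuple
from `A`. -/
def FinSatIn {m : ℕ} (p : Set (PFormula L M m)) (A : Set M) : Prop :=
  ∀ s : Finset (PFormula L M m), ↑s ⊆ p →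
    ∃ a : Fin m → M, (∀ i, a i ∈ A) ∧ ∀ ψ ∈ s, ψ.Realize a

/-- The complete type of an element `a` over the set `C`. -/
def tpOver (L : FirstOrder.Language.{u, u}) {M : Type u} [L.Structure M]
    (a : M) (C : Set M) : Set (PFormula L M 1) :=
  {ψ | ψ.Over C ∧ ψ.Realize1 a}

/-- `p` (a type with parameters in `B`) does not split over `A`. -/
def DoesNotSplitOver {m : ℕ} (p : Set (PFormula L M m)) (B A : Set M) : Prop :=
  ∀ (n : ℕ) (b c : Fin n → M) (φ : L.Formula (Fin m ⊕ Fin n)),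
    (∀ i, b i ∈ B) → (∀ i, c i ∈ B) → SameTypeOver L A b c →
    ((⟨n, φ, b⟩ : PFormula L M m) ∈ p ↔ (⟨n, φ, c⟩ : PFormula L M m) ∈ p)

/-- `p` (a type over `B`) is definable over `A`. -/
def DefinableOver {m : ℕ} (p : Set (PFormula L M m)) (B A : Set M) : Prop :=
  ∀ (n : ℕ) (φ : L.Formula (Fin m ⊕ Fin n)),
    ∃ (k : ℕ) (d : L.Formula (Fin n ⊕ Fin k)) (e : Fin k → M), (∀ i, e i ∈ A) ∧
      ∀ b : Fin n → M, (∀ i, b i ∈ B) →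
        ((⟨n, φ, b⟩ : PFormula L M m) ∈ p ↔ d.Realize (Sum.elim b e))

/-- The parametrized formula `ψ` divides over `A`. -/
def PFormula.Divides {m : ℕ} (ψ : PFormula L M m) (A : Set M) : Prop :=
  ∃ (f : ℕ → Fin ψ.n → M) (k : ℕ), 0 < k ∧ f 0 = ψ.par ∧ IndiscTupleSeqOver L A f ∧
    ∀ s : Finset ℕ, s.card = k →
      ¬ ∃ a : Fin m → M, ∀ i ∈ s, ψ.toFormula.Realize (Sum.elim a (f i))

/-- The (partial) type `p` forks over `A`: some finite subset of `p` implies a finite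
disjunction of formulas each of which divides over `A`. -/
def ForksOver {m : ℕ} (p : Set (PFormula L M m)) (A : Set M) : Prop :=
  ∃ (r : ℕ) (ψs : Fin r → PFormula L M m), (∀ j, (ψs j).Divides A) ∧
    ∃ s : Finset (PFormula L M m), ↑s ⊆ p ∧
      ∀ a : Fin m → M, (∀ χ ∈ s, χ.Realize a) → ∃ j, (ψs j).Realize a

/-- `p` splits strongly over `A`. -/
def SplitsStronglyOver {m : ℕ} (p : Set (PFormula L M m)) (A : Set M) : Prop :=
  ∃ (n : ℕ) (f : ℕ → Fin n → M) (φ : L.Formula (Fin m ⊕ Fin n)),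
    IndiscTupleSeqOver L A f ∧
    (⟨n, φ, f 0⟩ : PFormula L M m) ∈ p ∧ (PFormula.not ⟨n, φ, f 1⟩ : PFormula L M m) ∈ p

/-- Two tuples are of Lascar distance one over `A`: they lie on a common
`A`-indiscernible sequence. -/
def LascarDistOne (L : FirstOrder.Language.{u, u}) {M : Type u} [L.Structure M]
    (A : Set M) {n : ℕ} (b c : Fin n → M) : Prop :=
  ∃ f : ℕ → Fin n → M, IndiscTupleSeqOver L A f ∧ ∃ i j : ℕ, f i = b ∧ f j = c

/-- Two tuples have the same Lascar strong type over `A` (finite Lascar distance). -/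
def SameLstp (L : FirstOrder.Language.{u, u}) {M : Type u} [L.Structure M]
    (A : Set M) {n : ℕ} (b c : Fin n → M) : Prop :=
  Relation.ReflTransGen (fun x y => LascarDistOne L A x y) b c

/-- `p` (a type over `B`) Lascar-splits over `A`. -/
def LascarSplitsOver {m : ℕ} (p : Set (PFormula L M m)) (B A : Set M) : Prop :=
  ∃ (n : ℕ) (b c : Fin n → M) (φ : L.Formula (Fin m ⊕ Fin n)),
    (∀ i, b i ∈ B) ∧ (∀ i, c i ∈ B) ∧ SameLstp L A b c ∧
    (⟨n, φ, b⟩ : PFormula L M m) ∈ p ∧ (PFormula.not ⟨n, φ, c⟩ : PFormula L M m) ∈ p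

/-- The structure `M` is NIP ("dependent"): no formula alternates infinitely often on an
indiscernible sequence. -/
def IsNIP (L : FirstOrder.Language.{u, u}) (M : Type u) [L.Structure M] : Prop :=
  ∀ (d k : ℕ) (φ : L.Formula (Fin d ⊕ Fin k)) (f : ℕ → Fin d → M) (c : Fin k → M),
    IndiscTupleSeqOver L (∅ : Set M) f →
    ¬ ({i : ℕ | φ.Realize (Sum.elim (f i) c)}.Infinite ∧
        {i : ℕ | ¬ φ.Realize (Sum.elim (f i) c)}.Infinite)

/-- The subset `N` of the monster is `κ`-saturated: every type over a subset of `N` of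
size `< κ` which is finitely satisfiable is realized inside `N`. -/
def SetSaturated (L : FirstOrder.Language.{u, u}) {M : Type u} [L.Structure M]
    (N : Set M) (κ : Cardinal.{u}) : Prop :=
  ∀ C : Set M, C ⊆ N → #C < κ → ∀ (m : ℕ) (p : Set (PFormula L M m)),
    (∀ ψ ∈ p, ψ.Over C) →
    (∀ s : Finset (PFormula L M m), ↑s ⊆ p → ∃ a : Fin m → M, ∀ ψ ∈ s, ψ.Realize a) →
    ∃ a : Fin m → M, (∀ i, a i ∈ N) ∧ ∀ ψ ∈ p, ψ.Realize a

/-- `M` is a monster model: it is saturated in every cardinality below `#M`. -/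
def IsMonster (L : FirstOrder.Language.{u, u}) (M : Type u) [L.Structure M] : Prop :=
  ∀ κ : Cardinal.{u}, κ < #M → SetSaturated L (Set.univ : Set M) κ

/-- The average type of an `ω`-indexed indiscernible set over `C`: formulas over `C` true
of all but finitely many elements of the set. -/
def AvSet (L : FirstOrder.Language.{u, u}) {M : Type u} [L.Structure M]
    (f : ℕ → M) (C : Set M) : Set (PFormula L M 1) :=
  {ψ | ψ.Over C ∧ {i : ℕ | ¬ ψ.Realize1 (f i)}.Finite}

/-- The average type of an endless indiscernible sequence over `C`: formulas over `C`
true of all sufficiently late elements of the sequence. -/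
def AvSeq (L : FirstOrder.Language.{u, u}) {M : Type u} [L.Structure M]
    {ι : Type*} [LinearOrder ι] (f : ι → M) (C : Set M) : Set (PFormula L M 1) :=
  {ψ | ψ.Over C ∧ ∃ i₀ : ι, ∀ i ≥ i₀, ψ.Realize1 (f i)}

/-- The algebraic closure of `A` in `M`. -/
def aclSet (L : FirstOrder.Language.{u, u}) {M : Type u} [L.Structure M]
    (A : Set M) : Set M :=
  {a | ∃ ψ : PFormula L M 1, ψ.Over A ∧ ψ.Realize1 a ∧ {x : M | ψ.Realize1 x}.Finite}

/-- `p ∈ S(A)` is generically stable: there is a nonforking sequence of realizations of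
`p` over `A` which is an indiscernible set. -/
def GenericallyStable (p : Set (PFormula L M 1)) (A : Set M) : Prop :=
  ∃ f : ℕ → M,
    (∀ i, ∀ ψ ∈ p, ψ.Realize1 (f i)) ∧
    IndiscSetOver L A f ∧
    ∀ i : ℕ, ¬ ForksOver (tpOver L (f i) (A ∪ f '' {j | j < i})) A

/-- The Boolean algebra of `B`-definable subsets of `A^m`. -/
def DefSub (L : FirstOrder.Language.{u, u}) {M : Type u} [L.Structure M]
    (A B : Set M) (m : ℕ) : Set (Set (Fin m → M)) :=
  {S | ∃ ψ : PFormula L M m, ψ.Over B ∧ S = {a | (∀ i, a i ∈ A) ∧ ψ.Realize a}}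

/-- An ultrafilter on the Boolean algebra of `B`-definable subsets of `A^m`. -/
structure UltraOn (L : FirstOrder.Language.{u, u}) {M : Type u} [L.Structure M]
    (A B : Set M) (m : ℕ) where
  sets : Set (Set (Fin m → M))
  subset_def : sets ⊆ DefSub L A B m
  inter_mem : ∀ S ∈ sets, ∀ T ∈ sets, S ∩ T ∈ sets
  superset_mem : ∀ S ∈ sets, ∀ T ∈ DefSub L A B m, S ⊆ T → T ∈ sets
  nonempty_mem : ∀ S ∈ sets, S.Nonempty
  ultra : ∀ S ∈ DefSub L A B m,
    S ∈ sets ∨ ({a : Fin m → M | ∀ i, a i ∈ A} \ S) ∈ sets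

/-- The average type of an ultrafilter on `Def_m(A,B)` over `B`. -/
def AvU {A B : Set M} {m : ℕ} (U : UltraOn L A B m) : Set (PFormula L M m) :=
  {ψ | ψ.Over B ∧ {a : Fin m → M | (∀ i, a i ∈ A) ∧ ψ.Realize a} ∈ U.sets}

/-! Since `f` is indiscernible, NIP forbids a formula from both holding and failing at
infinitely many `f i`, so exactly one of `ψ`, `¬ψ` holds cofinitely often; and finitely many
cofinite sets of indices still meet, which makes the average type consistent. -/

namespace PFormula

variable {m : ℕ}

@[simp]
theorem realize1_not (ψ : PFormula L M 1) (a : M) : ψ.not.Realize1 a ↔ ¬ψ.Realize1 a :=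
  Iff.rfl

theorem over_not {ψ : PFormula L M m} {B : Set M} : ψ.not.Over B ↔ ψ.Over B :=
  Iff.rfl

end PFormula

theorem SameTypeOver.comp {A : Set M} {γ γ' : Type} {b c : γ → M}
    (h : SameTypeOver L A b c) (g : γ' → γ) : SameTypeOver L A (b ∘ g) (c ∘ g) := by
  intro k φ a ha
  have key := h k (φ.relabel (Sum.map g id)) a ha
  simp only [Language.Formula.realize_relabel, Sum.elim_comp_map, Function.comp_id] at key
  exact key

theorem IndiscSetOver.indiscSeqOver {A : Set M} {ι : Type*} [LinearOrder ι] {f : ι → M}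
    (hf : IndiscSetOver L A f) : IndiscSeqOver L A f :=
  fun n _ _ hs ht => hf n _ _ hs.injective ht.injective

theorem IndiscSeqOver.indiscTupleSeqOver_fin_one {A : Set M} {ι : Type*} [LinearOrder ι]
    {f : ι → M} (hf : IndiscSeqOver L A f) :
    IndiscTupleSeqOver L A (fun i (_ : Fin 1) => f i) :=
  fun n s t hs ht => (hf n s t hs ht).comp Prod.fst

theorem IsNIP.finite_realize1_or_finite_not_realize1 (hNIP : IsNIP L M) {f : ℕ → M}
    (hf : IndiscSeqOver L (∅ : Set M) f) (ψ : PFormula L M 1) :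
    {i | ψ.Realize1 (f i)}.Finite ∨ {i | ¬ψ.Realize1 (f i)}.Finite := by
  by_contra! h
  exact hNIP 1 ψ.n ψ.toFormula _ ψ.par hf.indiscTupleSeqOver_fin_one h

theorem mem_avSet_iff {f : ℕ → M} {B : Set M} {ψ : PFormula L M 1} :
    ψ ∈ AvSet L f B ↔ ψ.Over B ∧ ∀ᶠ i in Filter.cofinite, ψ.Realize1 (f i) := by
  rw [Filter.eventually_cofinite]
  rfl

theorem IsNIP.mem_avSet_or_not_mem_avSet (hNIP : IsNIP L M) {f : ℕ → M}
    (hf : IndiscSeqOver L (∅ : Set M) f) {B : Set M} {ψ : PFormula L M 1} (hψ : ψ.Over B) :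
    ψ ∈ AvSet L f B ∨ ψ.not ∈ AvSet L f B := by
  simp only [AvSet, Set.mem_ofPred_eq, PFormula.over_not, PFormula.realize1_not, not_not]
  rcases hNIP.finite_realize1_or_finite_not_realize1 hf ψ with h | h
  · exact Or.inr ⟨hψ, h⟩
  · exact Or.inl ⟨hψ, h⟩

theorem finSatIn_avSet (f : ℕ → M) (B : Set M) : FinSatIn (AvSet L f B) (Set.range f) := by
  intro s hs
  have hall : ∀ᶠ i in Filter.cofinite, ∀ ψ ∈ s, ψ.Realize1 (f i) :=
    Filter.eventually_all_finset s |>.mpr fun ψ hψ => (mem_avSet_iff.mp (hs hψ)).2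
  obtain ⟨i, hi⟩ := hall.exists
  exact ⟨fun _ => f i, fun _ => Set.mem_range_self i, hi⟩

theorem FinSatIn.finite_subset_realized {m : ℕ} {p : Set (PFormula L M m)} {A : Set M}
    (hp : FinSatIn p A) (s : Finset (PFormula L M m)) (hs : ↑s ⊆ p) :
    ∃ a : Fin m → M, ∀ ψ ∈ s, ψ.Realize a :=
  let ⟨a, _, ha⟩ := hp s hs
  ⟨a, ha⟩

theorem average_type_is_complete_type_general
    (hNIP : IsNIP L M)
    (f : ℕ → M) (hf : IndiscSetOver L (∅ : Set M) f)
    (B : Set M) :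
    IsTypeOver (AvSet L f B) B :=
  ⟨fun _ hψ => hψ.1,
    fun _ hψ => hNIP.mem_avSet_or_not_mem_avSet hf.indiscSeqOver hψ,
    (finSatIn_avSet f B).finite_subset_realized⟩

/-- The average type of an infinite indiscernible set over any parameter set
`B` is a complete consistent type over `B`. -/
theorem average_type_is_complete_type
    (hM : IsMonster L M) (hNIP : IsNIP L M)
    (f : ℕ → M) (hinj : Function.Injective f) (hf : IndiscSetOver L (∅ : Set M) f)
    (B : Set M) :
    IsTypeOver (AvSet L f B) B :=
  average_type_is_complete_type_general hNIP f hf B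
end

section
/- In an NIP theory, strong splitting implies dividing: if p ∈ S(B) splits strongly over A, then some formula in p divides over A. -/
open FirstOrder Cardinal

universe u

variable {L : FirstOrder.Language.{u, u}} {M : Type u} [L.Structure M]

/-!
Let `φ(x, b₀) ∧ ¬φ(x, b₁) ∈ p` with `(bᵢ)` indiscernible over `A`. The pairs `(b₂ᵢ, b₂ᵢ₊₁)` are
again indiscernible over `A`, and `ψ(x; y, z) = φ(x, y) ∧ ¬φ(x, z)` at the first pair lies in `p`.
If `ψ` does not divide, then for every `k` some `aₖ` satisfies `φ(aₖ, b₂ᵢ) ∧ ¬φ(aₖ, b₂ᵢ₊₁)` for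
all `i < k`. The limit along a nonprincipal ultrafilter of the types of `(aₖ, b)` is realized by
some `(a, c)`, one tuple at a time, since the monster is only guaranteed to be saturated over finite
sets (when `M` is countable). Then `c` has the type of `b`, so it is indiscernible, and `φ(a, cᵢ)`
alternates infinitely often, contradicting NIP. (If `M` is finite, some `aₖ` recurs infinitely
often and already alternates on `b`.)
-/

open FirstOrder.Language

theorem PFormula.realize_not {m : ℕ} (ψ : PFormula L M m) (a : Fin m → M) :
    ψ.not.Realize a ↔ ¬ ψ.Realize a :=
  Formula.realize_not

theorem IsTypeOver.mem_of_imp {m : ℕ} {p : Set (PFormula L M m)} {B : Set M}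
    (hp : IsTypeOver p B) {ψ ψ₁ ψ₂ : PFormula L M m} (hψ : ψ.Over B) (h₁ : ψ₁ ∈ p) (h₂ : ψ₂ ∈ p)
    (himp : ∀ a, ψ₁.Realize a → ψ₂.Realize a → ψ.Realize a) : ψ ∈ p := by
  classical
  refine (hp.2.1 ψ hψ).resolve_right fun hnot => ?_
  obtain ⟨a, ha⟩ := hp.2.2 {ψ₁, ψ₂, ψ.not} (by simp [Set.insert_subset_iff, h₁, h₂, hnot])
  exact (ψ.realize_not a).1 (ha _ (by simp)) (himp a (ha _ (by simp)) (ha _ (by simp)))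

def splittingFormula {α : Type*} {n : ℕ} (φ : L.Formula (α ⊕ Fin n)) :
    L.Formula (α ⊕ Fin (n + n)) :=
  φ.relabel (Sum.map id (Fin.castAdd n)) ⊓ (φ.relabel (Sum.map id (Fin.natAdd n))).not

theorem realize_splittingFormula {α : Type*} {n : ℕ} (φ : L.Formula (α ⊕ Fin n)) (a : α → M)
    (b c : Fin n → M) :
    (splittingFormula φ).Realize (Sum.elim a (Fin.append b c)) ↔
      φ.Realize (Sum.elim a b) ∧ ¬ φ.Realize (Sum.elim a c) := by
  simp only [splittingFormula, Formula.realize_inf, Formula.realize_not, Formula.realize_relabel,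
    Sum.elim_comp_map, Function.comp_id]
  rw [show Fin.append b c ∘ Fin.castAdd n = b from funext (Fin.append_left b c),
    show Fin.append b c ∘ Fin.natAdd n = c from funext (Fin.append_right b c)]

def doubleIndex {N : ℕ} (u : Fin N → ℕ) (l : Fin (2 * N)) : ℕ :=
  2 * u ⟨l / 2, by omega⟩ + l % 2

theorem StrictMono.doubleIndex {N : ℕ} {u : Fin N → ℕ} (hu : StrictMono u) :
    StrictMono (doubleIndex u) := by
  intro l₁ l₂ hl
  have hl' : (l₁ : ℕ) < l₂ := hl
  simp only [_root_.doubleIndex]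
  rcases Nat.lt_or_ge (l₁ / 2) (l₂ / 2) with h | h
  · have := hu (show (⟨l₁ / 2, by omega⟩ : Fin N) < ⟨l₂ / 2, by omega⟩ from h)
    omega
  · have h' : (l₁ : ℕ) / 2 = l₂ / 2 := by omega
    simp only [h']
    omega

def pairIndex {N d : ℕ} (q : Fin N × Fin (d + d)) : Fin (2 * N) × Fin d :=
  Fin.addCases (fun l => (⟨2 * q.1, by omega⟩, l)) (fun l => (⟨2 * q.1 + 1, by omega⟩, l)) q.2

theorem apply_doubleIndex_pairIndex {N d : ℕ} (f : ℕ → Fin d → M) (u : Fin N → ℕ)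
    (q : Fin N × Fin (d + d)) :
    f (doubleIndex u (pairIndex q).1) (pairIndex q).2 =
      Fin.append (f (2 * u q.1)) (f (2 * u q.1 + 1)) q.2 := by
  obtain ⟨j, l⟩ := q
  refine Fin.addCases (fun l => ?_) (fun l => ?_) l <;>
    simp only [pairIndex, doubleIndex, Fin.addCases_left, Fin.addCases_right, Fin.append_left,
      Fin.append_right]
  · rw [show (⟨2 * (j : ℕ) / 2, _⟩ : Fin N) = j from Fin.ext (by simp)]
    simp
  · rw [show (⟨(2 * (j : ℕ) + 1) / 2, _⟩ : Fin N) = j from Fin.ext (by simp; omega)]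
    congr 1
    omega

section Indiscernible

variable {d : ℕ} {f : ℕ → Fin d → M}

theorem IndiscTupleSeqOver.mono {A B : Set M} (hf : IndiscTupleSeqOver L A f) (hBA : B ⊆ A) :
    IndiscTupleSeqOver L B f :=
  fun n s t hs ht k θ a ha => hf n s t hs ht k θ a fun i => hBA (ha i)

theorem IndiscTupleSeqOver.pairs {A : Set M} (hf : IndiscTupleSeqOver L A f) :
    IndiscTupleSeqOver L A fun i => Fin.append (f (2 * i)) (f (2 * i + 1)) := by
  intro N s t hs ht k θ a ha
  have hrel : ∀ u : Fin N → ℕ,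
      (θ.relabel (Sum.map pairIndex id)).Realize
          (Sum.elim (fun r : Fin (2 * N) × Fin d => f (doubleIndex u r.1) r.2) a) ↔
        θ.Realize (Sum.elim (fun q => Fin.append (f (2 * u q.1)) (f (2 * u q.1 + 1)) q.2) a) := by
    intro u
    rw [Formula.realize_relabel, Sum.elim_comp_map, Function.comp_id,
      show _ ∘ pairIndex = _ from funext (apply_doubleIndex_pairIndex f u)]
  simpa only [hrel] using
    hf (2 * N) _ _ hs.doubleIndex ht.doubleIndex k (θ.relabel (Sum.map pairIndex id)) a ha


theorem IndiscTupleSeqOver.of_forall_realize_iff (hf : IndiscTupleSeqOver L ∅ f)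
    {g : ℕ → Fin d → M} (h : ∀ (N : ℕ) (θ : L.Formula (Fin N × Fin d)),
      θ.Realize (fun q => g q.1 q.2) ↔ θ.Realize (fun q => f q.1 q.2)) :
    IndiscTupleSeqOver L ∅ g := by
  intro n s t hs ht k θ a ha
  obtain ⟨N, hN⟩ := ((Set.finite_range s).union (Set.finite_range t)).bddAbove
  have transfer : ∀ u : Fin n → ℕ, (∀ j, u j ≤ N) →
      (θ.Realize (Sum.elim (fun q => g (u q.1) q.2) a) ↔
        θ.Realize (Sum.elim (fun q => f (u q.1) q.2) a)) := by
    intro u hu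
    let ρ : (Fin n × Fin d) ⊕ Fin k → Fin (N + 1) × Fin d :=
      Sum.elim (fun q => (⟨u q.1, Nat.lt_succ_of_le (hu q.1)⟩, q.2)) fun i => (ha i).elim
    have hρ : ∀ c : ℕ → Fin d → M,
        Sum.elim (fun q => c (u q.1) q.2) a = (fun q : Fin (N + 1) × Fin d => c q.1 q.2) ∘ ρ :=
      fun c => funext fun x => by rcases x with q | i; exacts [rfl, (ha i).elim]
    simpa only [hρ, Formula.realize_relabel] using h (N + 1) (θ.relabel ρ)
  exact (transfer s fun j => hN (.inl ⟨j, rfl⟩)).trans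
    ((hf n s t hs ht k θ a ha).trans (transfer t fun j => hN (.inr ⟨j, rfl⟩)).symm)

end Indiscernible

theorem PFormula.divides_of_indiscernible {A : Set M} {m n K : ℕ} {f : ℕ → Fin n → M}
    (hf : IndiscTupleSeqOver L A f) (φ : L.Formula (Fin m ⊕ Fin n)) (hK : 0 < K)
    (hinc : ¬ ∃ a : Fin m → M, ∀ i < K, φ.Realize (Sum.elim a (f i))) :
    (⟨n, φ, f 0⟩ : PFormula L M m).Divides A := by
  refine ⟨f, K, hK, rfl, hf, fun S hS ⟨a, ha⟩ => hinc ?_⟩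
  let Θ : L.Formula ((Fin K × Fin n) ⊕ Fin 0) := Formula.iExs (Fin m) <|
    Formula.iInf fun j : Fin K => φ.relabel (Sum.elim Sum.inr fun l => Sum.inl (Sum.inl (j, l)))
  have hΘ : ∀ u : Fin K → ℕ, Θ.Realize (Sum.elim (fun q => f (u q.1) q.2) Fin.elim0) ↔
      ∃ a : Fin m → M, ∀ j, φ.Realize (Sum.elim a (f (u j))) := by
    intro u
    simp only [Θ, Formula.realize_iExs, Formula.realize_iInf, Formula.realize_relabel,
      Sum.comp_elim, Sum.elim_comp_inr]
    rfl
  have := (hΘ _).1 <| (hf K _ _ (S.orderEmbOfFin hS).strictMono Fin.val_strictMono 0 Θ Fin.elim0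
    (fun i => i.elim0)).1 <| (hΘ _).2 ⟨a, fun j => ha _ (S.orderEmbOfFin_mem hS j)⟩
  obtain ⟨w, hw⟩ := this
  exact ⟨w, fun i hi => hw ⟨i, hi⟩⟩

theorem IsMonster.exists_realize_of_finite (hM : IsMonster L M) [Infinite M] {α : Type*}
    [Finite α] (e : α → M) {n : ℕ} (Θ : Set (L.Formula (α ⊕ Fin n)))
    (hΘ : ∀ S : Finset (L.Formula (α ⊕ Fin n)), ↑S ⊆ Θ →
      ∃ w : Fin n → M, ∀ θ ∈ S, θ.Realize (Sum.elim e w)) :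
    ∃ w : Fin n → M, ∀ θ ∈ Θ, θ.Realize (Sum.elim e w) := by
  classical
  obtain ⟨r, ⟨eqv⟩⟩ := Finite.exists_equiv_fin α
  let toP : L.Formula (α ⊕ Fin n) → PFormula L M n := fun θ =>
    ⟨r, θ.relabel (Sum.elim (Sum.inr ∘ eqv) Sum.inl), e ∘ eqv.symm⟩
  have realize_toP : ∀ θ w, (toP θ).Realize w ↔ θ.Realize (Sum.elim e w) := by
    intro θ w
    simp only [toP, PFormula.Realize, Formula.realize_relabel]
    congr! 1
    ext (x | x) <;> simp
  obtain ⟨c, hc⟩ := Cardinal.lt_aleph0.1 (Set.finite_range e).lt_aleph0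
  obtain ⟨w, -, hw⟩ := hM ((c + 1 : ℕ) : Cardinal) (natCast_lt_aleph0.trans_le (aleph0_le_mk M))
    (Set.range e) (Set.subset_univ _) (by rw [hc]; exact_mod_cast c.lt_succ_self) n (toP '' Θ)
    (by rintro _ ⟨θ, -, rfl⟩ i; exact ⟨_, rfl⟩)
    (by
      intro S hS
      obtain ⟨S', hS'Θ, rfl⟩ := Finset.subset_set_image_iff.1 hS
      obtain ⟨w, hw⟩ := hΘ S' hS'Θ
      refine ⟨w, ?_⟩
      simp only [Finset.mem_image, forall_exists_index, and_imp]
      rintro _ θ hθ rfl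
      exact (realize_toP θ w).2 (hw θ hθ))
  exact ⟨w, fun θ hθ => (realize_toP θ w).1 (hw _ ⟨θ, hθ, rfl⟩)⟩

section LimitType

variable {ι α : Type*} {U : Ultrafilter ι}

def RealizesLimitType (L : FirstOrder.Language.{u, u}) {M : Type u} [L.Structure M]
    (U : Ultrafilter ι) (b : ι → α → M) (e : α → M) : Prop :=
  ∀ θ : L.Formula α, θ.Realize e ↔ ∀ᶠ k in U, θ.Realize (b k)

theorem realizesLimitType_const_iff {c e : α → M} :
    RealizesLimitType L U (fun _ => c) e ↔ ∀ θ : L.Formula α, θ.Realize e ↔ θ.Realize c := by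
  simp only [RealizesLimitType, Filter.eventually_const]

theorem RealizesLimitType.of_forall {b : ι → α → M} {e : α → M}
    (h : ∀ θ : L.Formula α, (∀ᶠ k in U, θ.Realize (b k)) → θ.Realize e) :
    RealizesLimitType L U b e := by
  refine fun θ => ⟨fun he => ?_, h θ⟩
  by_contra hU
  have := h θ.not (by simpa only [Formula.realize_not] using Ultrafilter.eventually_not.2 hU)
  exact (Formula.realize_not.1 this) he

theorem RealizesLimitType.comp {β : Type*} {b : ι → α → M} {e : α → M}
    (h : RealizesLimitType L U b e) (σ : β → α) :
    RealizesLimitType L U (fun k => b k ∘ σ) (e ∘ σ) := fun θ => by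
  simpa only [Formula.realize_relabel] using h (θ.relabel σ)

theorem RealizesLimitType.exists_extend (hM : IsMonster L M) [Infinite M] [Finite α]
    {b : ι → α → M} {e : α → M} (h : RealizesLimitType L U b e) {n : ℕ} (d : ι → Fin n → M) :
    ∃ w : Fin n → M, RealizesLimitType L U (fun k => Sum.elim (b k) (d k)) (Sum.elim e w) := by
  obtain ⟨w, hw⟩ := hM.exists_realize_of_finite e
    {θ | ∀ᶠ k in U, θ.Realize (Sum.elim (b k) (d k))} fun S hS => by
      let θ := Formula.iInf fun χ : S => (χ : L.Formula (α ⊕ Fin n))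
      have hθ : ∀ᶠ k in U, θ.Realize (Sum.elim (b k) (d k)) := by
        simp only [θ, Formula.realize_iInf, Subtype.forall]
        exact (Filter.eventually_all_finset S).2 fun χ hχ => hS hχ
      obtain ⟨w, hw⟩ := Formula.realize_iExs.1 <| (h (θ.iExs (Fin n))).2 <|
        hθ.mono fun k hk => Formula.realize_iExs.2 ⟨d k, hk⟩
      exact ⟨w, fun χ hχ => Formula.realize_iInf.1 hw ⟨χ, hχ⟩⟩
  exact ⟨w, .of_forall hw⟩

end LimitType

theorem exists_seq_forall_of_exists_snoc {β : Type*} (P : ∀ s : ℕ, (Fin s → β) → Prop)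
    (h0 : P 0 Fin.elim0) (hstep : ∀ s c, P s c → ∃ w, P (s + 1) (Fin.snoc c w)) :
    ∃ cs : ℕ → β, ∀ s, P s fun i => cs i := by
  choose next hnext using hstep
  let F : ∀ s, {c // P s c} := fun s =>
    Nat.rec ⟨Fin.elim0, h0⟩ (fun s c => ⟨Fin.snoc c.1 (next s c.1 c.2), hnext s c.1 c.2⟩) s
  have hF : ∀ s (t : Fin s), (F s).1 t = (F (t + 1)).1 (Fin.last t) := by
    intro s
    induction s with
    | zero => exact fun t => t.elim0
    | succ s ih =>
      intro t
      induction t using Fin.lastCases with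
      | last => rfl
      | cast t => exact (Fin.snoc_castSucc (α := fun _ => β) ..).trans (ih t)
  refine ⟨fun i => (F (i + 1)).1 (Fin.last i), fun s => ?_⟩
  convert (F s).2 using 1
  exact funext fun t => (hF s t).symm

theorem exists_realizesLimitType_seq (hM : IsMonster L M) [Infinite M] {ι : Type*}
    (U : Ultrafilter ι) {m n : ℕ} (a' : ι → Fin m → M) (f : ℕ → Fin n → M) :
    ∃ (a : Fin m → M) (c : ℕ → Fin n → M), ∀ s : ℕ,
      RealizesLimitType L U (fun k => Sum.elim (a' k) fun q : Fin s × Fin n => f q.1 q.2)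
        (Sum.elim a fun q : Fin s × Fin n => c q.1 q.2) := by
  obtain ⟨a, ha⟩ := (realizesLimitType_const_iff.2 fun _ => Iff.rfl :
    RealizesLimitType L U (fun _ => (Empty.elim : Empty → M)) Empty.elim).exists_extend hM a'
  refine ⟨a, exists_seq_forall_of_exists_snoc (fun s (c : Fin s → Fin n → M) =>
    RealizesLimitType L U (fun k => Sum.elim (a' k) fun q : Fin s × Fin n => f q.1 q.2)
      (Sum.elim a fun q : Fin s × Fin n => c q.1 q.2)) ?_ ?_⟩
  · convert ha.comp (Sum.elim Sum.inr fun q : Fin 0 × Fin n => q.1.elim0) using 2 <;>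
      ext (i | ⟨t, j⟩) <;> first | rfl | exact t.elim0
  · intro s c hc
    obtain ⟨w, hw⟩ := hc.exists_extend hM fun _ => f s
    refine ⟨w, ?_⟩
    convert hw.comp (Sum.elim (Sum.inl ∘ Sum.inl) fun q : Fin (s + 1) × Fin n =>
      Fin.lastCases (Sum.inr q.2) (fun t => Sum.inl (Sum.inr (t, q.2))) q.1) using 2 <;>
      ext (i | ⟨t, j⟩) <;> first | rfl | induction t using Fin.lastCases <;> simp

theorem IsNIP.not_forall_alternate (hNIP : IsNIP L M) {m n : ℕ} {g : ℕ → Fin n → M}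
    (hg : IndiscTupleSeqOver L ∅ g) (φ : L.Formula (Fin m ⊕ Fin n)) (a : Fin m → M) :
    ¬ ∀ i, φ.Realize (Sum.elim a (g (2 * i))) ∧ ¬ φ.Realize (Sum.elim a (g (2 * i + 1))) := by
  intro h
  have hswap : ∀ i, (φ.relabel Sum.swap).Realize (Sum.elim (g i) a) ↔
      φ.Realize (Sum.elim a (g i)) := by
    simp [Formula.realize_relabel, Sum.elim_swap]
  refine hNIP n m (φ.relabel Sum.swap) g a hg ⟨?_, ?_⟩
  · refine Set.infinite_of_injective_forall_mem (f := fun i => 2 * i) ?_ fun i => ?_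
    · exact fun i j hij => by simpa using hij
    · exact (hswap _).2 (h i).1
  · refine Set.infinite_of_injective_forall_mem (f := fun i => 2 * i + 1) ?_ fun i => ?_
    · exact fun i j hij => by simpa using hij
    · exact fun hi => (h i).2 ((hswap _).1 hi)

theorem IsNIP.not_forall_exists_alternate (hNIP : IsNIP L M) (hM : IsMonster L M) {m n : ℕ}
    {f : ℕ → Fin n → M} (hf : IndiscTupleSeqOver L ∅ f) (φ : L.Formula (Fin m ⊕ Fin n)) :
    ¬ ∀ k, ∃ a : Fin m → M, ∀ i < k,
      φ.Realize (Sum.elim a (f (2 * i))) ∧ ¬ φ.Realize (Sum.elim a (f (2 * i + 1))) := by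
  intro h
  choose a' ha' using h
  rcases finite_or_infinite M with hfin | hinf
  · obtain ⟨a, ha⟩ := Finite.exists_infinite_fiber a'
    refine hNIP.not_forall_alternate hf φ a fun i => ?_
    obtain ⟨k, rfl, hik⟩ := (Set.infinite_coe_iff.1 ha).exists_gt i
    exact ha' k i hik
  · let U : Ultrafilter ℕ := Filter.hyperfilter ℕ
    have hU : ∀ i, ∀ᶠ k in U, i < k := fun i =>
      Filter.hyperfilter_le_cofinite (Nat.cofinite_eq_atTop ▸ Filter.eventually_gt_atTop i)
    obtain ⟨a, c, hc⟩ := exists_realizesLimitType_seq hM U a' f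
    have hlim : ∀ j, φ.Realize (Sum.elim a (c j)) ↔
        ∀ᶠ k in U, φ.Realize (Sum.elim (a' k) (f j)) := by
      intro j
      have h := (hc (j + 1)).comp (Sum.map id fun l => (Fin.last j, l)) φ
      simp only [Sum.elim_comp_map] at h
      exact h
    have hcf : IndiscTupleSeqOver L ∅ c := hf.of_forall_realize_iff fun s =>
      realizesLimitType_const_iff.1 ((hc s).comp Sum.inr)
    refine hNIP.not_forall_alternate hcf φ a fun i => ⟨?_, fun hi => ?_⟩
    · exact (hlim _).2 ((hU i).mono fun k hk => (ha' k i hk).1)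
    · obtain ⟨k, hik, hk⟩ := ((hU i).and ((hlim _).1 hi)).exists
      exact (ha' k i hik).2 hk

/-- In an NIP theory, strong splitting implies dividing: if `p ∈ S(B)`
splits strongly over `A`, then some formula in `p` divides over `A`. -/
theorem strong_splitting_implies_dividing
    (hM : IsMonster L M) (hNIP : IsNIP L M) {m : ℕ}
    (A B : Set M) (p : Set (PFormula L M m)) (hp : IsTypeOver p B)
    (hss : SplitsStronglyOver p A) :
    ∃ ψ ∈ p, PFormula.Divides ψ A := by
  obtain ⟨n, f, φ, hf, h₀, h₁⟩ := hss
  let g : ℕ → Fin (n + n) → M := fun i => Fin.append (f (2 * i)) (f (2 * i + 1))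
  have hψ : (⟨n + n, splittingFormula φ, g 0⟩ : PFormula L M m) ∈ p := by
    have hg₀ : ∀ i, g 0 i ∈ B := (Fin.forall_fin_add _).2
      ⟨fun j => by simp only [g, Fin.append_left]; exact hp.1 _ h₀ j,
        fun j => by simp only [g, Fin.append_right]; exact hp.1 _ h₁ j⟩
    exact hp.mem_of_imp hg₀ h₀ h₁ fun a ha hb =>
      (realize_splittingFormula φ a _ _).2 ⟨ha, (PFormula.realize_not _ a).1 hb⟩
  refine ⟨_, hψ, ?_⟩
  by_contra hnd
  refine hNIP.not_forall_exists_alternate hM (hf.mono (Set.empty_subset A)) φ fun k => ?_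
  by_cases hk : ∃ a : Fin m → M, ∀ i < k + 1, (splittingFormula φ).Realize (Sum.elim a (g i))
  · obtain ⟨a, ha⟩ := hk
    exact ⟨a, fun i hi => (realize_splittingFormula φ a _ _).1 (ha i (by omega))⟩
  · exact absurd (PFormula.divides_of_indiscernible hf.pairs _ k.succ_pos hk) hnd
end

section
/- In an NIP theory, if I = (b_i : i<ω) is a nonforking sequence in p ∈ S(A) (i.e., each tp(b_i/A b_{<i}) does not fork over A and all b_i realize p, with I indiscernible over A), then Av(I, I ∪ A) is a nonforking extension of p. -/
open FirstOrder Cardinal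

universe u

variable {L : FirstOrder.Language.{u, u}} {M : Type u} [L.Structure M]

/-! Finitely many formulas of `Av(I, I ∪ A)` have their parameters in `A b_{<i}` and are all
satisfied by `b_i` once `i` is large, so they lie in `tp(b_i / A b_{<i})`, which does not fork
over `A`. -/

open Filter

theorem PFormula.Over.mono {m : ℕ} {ψ : PFormula L M m} {B C : Set M} (h : ψ.Over B)
    (hBC : B ⊆ C) : ψ.Over C :=
  fun k => hBC (h k)

theorem subset_avSet {p : Set (PFormula L M 1)} {C : Set M} {f : ℕ → M}
    (hover : ∀ ψ ∈ p, ψ.Over C) (hreal : ∀ i, ∀ ψ ∈ p, ψ.Realize1 (f i)) :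
    p ⊆ AvSet L f C := fun ψ hψ =>
  ⟨hover ψ hψ, by simp [hreal _ ψ hψ]⟩

theorem PFormula.Over.eventually_over_initial_segment {m : ℕ} {ψ : PFormula L M m} {A : Set M}
    {f : ℕ → M} (h : ψ.Over (A ∪ Set.range f)) :
    ∀ᶠ i in atTop, ψ.Over (A ∪ f '' {j | j < i}) := by
  refine eventually_all.2 fun k => ?_
  rcases h k with hA | ⟨j, hj⟩
  · exact Eventually.of_forall fun _ => Or.inl hA
  · exact eventually_gt_atTop j |>.mono fun _ hi => Or.inr ⟨j, hi, hj⟩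

theorem eventually_mem_tpOver_of_mem_avSet {ψ : PFormula L M 1} {A : Set M} {f : ℕ → M}
    (hψ : ψ ∈ AvSet L f (A ∪ Set.range f)) :
    ∀ᶠ i in atTop, ψ ∈ tpOver L (f i) (A ∪ f '' {j | j < i}) := by
  have hrealize : ∀ᶠ i in atTop, ψ.Realize1 (f i) :=
    Nat.cofinite_eq_atTop ▸ eventually_cofinite.2 hψ.2
  exact hψ.1.eventually_over_initial_segment.and hrealize

theorem average_of_nonforking_sequence_nonforking_general
    (A : Set M) (p : Set (PFormula L M 1)) (hp : IsTypeOver p A)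
    (f : ℕ → M)
    (hreal : ∀ i : ℕ, ∀ ψ ∈ p, ψ.Realize1 (f i))
    (hnf : ∀ i : ℕ, ¬ ForksOver (tpOver L (f i) (A ∪ f '' {j | j < i})) A) :
    p ⊆ AvSet L f (A ∪ Set.range f) ∧
      ¬ ForksOver (AvSet L f (A ∪ Set.range f)) A := by
  refine ⟨subset_avSet (fun ψ hψ => (hp.1 ψ hψ).mono Set.subset_union_left) hreal, ?_⟩
  rintro ⟨r, ψs, hdiv, s, hsub, himp⟩
  obtain ⟨i, hi⟩ := (eventually_all_finset s).2
    (fun ψ hψ => eventually_mem_tpOver_of_mem_avSet (hsub hψ)) |>.exists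
  exact hnf i ⟨r, ψs, hdiv, s, hi, himp⟩

/-- In an NIP theory, if `I = (b_i : i<ω)` is a nonforking sequence in
`p ∈ S(A)`, then `Av(I, I ∪ A)` is a nonforking extension of `p`. -/
theorem average_of_nonforking_sequence_nonforking
    (hNIP : IsNIP L M)
    (A : Set M) (p : Set (PFormula L M 1)) (hp : IsTypeOver p A)
    (f : ℕ → M)
    (hreal : ∀ i : ℕ, ∀ ψ ∈ p, ψ.Realize1 (f i))
    (hind : IndiscSeqOver L A f)
    (hnf : ∀ i : ℕ, ¬ ForksOver (tpOver L (f i) (A ∪ f '' {j | j < i})) A) :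
    p ⊆ AvSet L f (A ∪ Set.range f) ∧
      ¬ ForksOver (AvSet L f (A ∪ Set.range f)) A :=
  average_of_nonforking_sequence_nonforking_general A p hp f hreal hnf
end

section
/- Let I = (b_i : i<ω) be an indiscernible set over A and C ⊇ A. Then the average type Av(I, C) is definable over ∪I; specifically, for each formula φ(x,y), letting k = k_φ be the NIP bound, φ(x,c) ∈ Av(I,C) if and only if ⊨ ⋁_{u ⊆ 2k, |u|=k} ⋀_{i ∈ u} φ(b_i, c). -/
open FirstOrder Cardinal

universe u

variable {L : FirstOrder.Language.{u, u}} {M : Type u} [L.Structure M]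

/-!
An element of `Av(I, C)` is a formula failing on only finitely many `b_i`. The alternation
bound says that either fewer than `k` of the `b_i` satisfy `φ(x, c)` or fewer than `k` fail
it. In the second case at least `k` of `b_0, …, b_{2k-1}` satisfy it; in the first case no
`k` of the `b_i` do, and `φ(x, c)` fails on cofinitely many `b_i`.
-/

section Counting

variable {P : ℕ → Prop} {k : ℕ}

theorem exists_subset_range_card_eq_of_encard_setOf_not_lt (h : {i | ¬ P i}.encard < k) :
    ∃ u : Finset ℕ, u ⊆ Finset.range (2 * k) ∧ u.card = k ∧ ∀ i ∈ u, P i := by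
  classical
  have hbad : ((Finset.range (2 * k)).filter (¬ P ·)).card < k := by
    have hsub : (↑((Finset.range (2 * k)).filter (¬ P ·)) : Set ℕ) ⊆ {i | ¬ P i} :=
      fun i hi => (Finset.mem_filter.mp hi).2
    exact_mod_cast (Set.encard_mono hsub).trans_lt h
  have hgood : k ≤ ((Finset.range (2 * k)).filter P).card := by
    have := Finset.card_filter_add_card_filter_not (s := Finset.range (2 * k)) P
    rw [Finset.card_range] at this
    omega
  obtain ⟨u, hu, hcard⟩ := Finset.exists_subset_card_eq hgood
  exact ⟨u, hu.trans (Finset.filter_subset _ _), hcard,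
    fun i hi => (Finset.mem_filter.mp (hu hi)).2⟩

theorem finite_setOf_not_iff_exists_subset_range_card_eq
    (hk : {i | P i}.encard < k ∨ {i | ¬ P i}.encard < k) :
    {i | ¬ P i}.Finite ↔
      ∃ u : Finset ℕ, u ⊆ Finset.range (2 * k) ∧ u.card = k ∧ ∀ i ∈ u, P i := by
  constructor
  · intro hfin
    rcases hk with hpos | hneg
    · have hpos_fin : {i | P i}.Finite :=
        Set.encard_lt_top_iff.mp (hpos.trans (ENat.natCast_lt_top k))
      have hneg_inf : {i | ¬ P i}.Infinite := by
        simpa only [Set.compl_ofPred] using hpos_fin.infinite_compl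
      exact absurd hfin hneg_inf
    · exact exists_subset_range_card_eq_of_encard_setOf_not_lt hneg
  · rintro ⟨u, -, hcard, hu⟩
    rcases hk with hpos | hneg
    · have hsub : (↑u : Set ℕ) ⊆ {i | P i} := fun i hi => hu i hi
      have := (Set.encard_mono hsub).trans_lt hpos
      rw [Set.encard_coe_eq_coe_finsetCard, hcard] at this
      exact absurd this (lt_irrefl _)
    · exact Set.encard_lt_top_iff.mp (hneg.trans (ENat.natCast_lt_top k))

end Counting

theorem mk_mem_avSet_iff (f : ℕ → M) (C : Set M) {n : ℕ} (φ : L.Formula (Fin 1 ⊕ Fin n))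
    (c : Fin n → M) :
    (⟨n, φ, c⟩ : PFormula L M 1) ∈ AvSet L f C ↔
      (∀ i, c i ∈ C) ∧ {i | ¬ φ.Realize (Sum.elim (fun _ => f i) c)}.Finite :=
  Iff.rfl

theorem average_definable_over_sequence_general
    (C : Set M) (f : ℕ → M) (n : ℕ) (φ : L.Formula (Fin 1 ⊕ Fin n)) (k : ℕ)
    (hk : ∀ c : Fin n → M,
      {i : ℕ | φ.Realize (Sum.elim (fun _ => f i) c)}.encard < (k : ℕ∞) ∨
      {i : ℕ | ¬ φ.Realize (Sum.elim (fun _ => f i) c)}.encard < (k : ℕ∞))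
    (c : Fin n → M) (hc : ∀ i, c i ∈ C) :
    (⟨n, φ, c⟩ : PFormula L M 1) ∈ AvSet L f C ↔
      ∃ u : Finset ℕ, u ⊆ Finset.range (2 * k) ∧ u.card = k ∧
        ∀ i ∈ u, φ.Realize (Sum.elim (fun _ => f i) c) := by
  rw [mk_mem_avSet_iff, and_iff_right hc]
  exact finite_setOf_not_iff_exists_subset_range_card_eq (hk c)

/-- The average type of an indiscernible set `I = (b_i : i<ω)` over
`C ⊇ A` is definable over `∪I`: for each formula `φ(x,y)` with NIP alternation bound
`k`, `φ(x,c) ∈ Av(I,C)` iff at least `k` among `b_0, …, b_{2k-1}` satisfy `φ(b_i,c)`. -/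
theorem average_definable_over_sequence
    (hNIP : IsNIP L M) (A C : Set M) (hAC : A ⊆ C)
    (f : ℕ → M) (hinj : Function.Injective f) (hset : IndiscSetOver L A f)
    (n : ℕ) (φ : L.Formula (Fin 1 ⊕ Fin n)) (k : ℕ)
    (hk : ∀ c : Fin n → M,
      {i : ℕ | φ.Realize (Sum.elim (fun _ => f i) c)}.encard < (k : ℕ∞) ∨
      {i : ℕ | ¬ φ.Realize (Sum.elim (fun _ => f i) c)}.encard < (k : ℕ∞))
    (c : Fin n → M) (hc : ∀ i, c i ∈ C) :
    (⟨n, φ, c⟩ : PFormula L M 1) ∈ AvSet L f C ↔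
      ∃ u : Finset ℕ, u ⊆ Finset.range (2 * k) ∧ u.card = k ∧
        ∀ i ∈ u, φ.Realize (Sum.elim (fun _ => f i) c) :=
  average_definable_over_sequence_general C f n φ k hk c hc
end
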